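/- The 1st-order backward difference operator for the Burgers nonlinear term, linearized about a constant equilibrium state u⁰ = a·𝟙 with a > 0, yields (together with the centered second-difference diffusion term with ν ≥ 0) a linearized operator N^L that is a circulant matrix all of whose eigenvalues have nonnegative real part. -/

import Mathlib

lemma fin_sub_eq_iff {n : ℕ} [NeZero n] (i j c : Fin n) : j = i - c ↔ i - j = c := by
  constructor
  · rintro rfl; exact sub_sub_cancel i c
  · rintro rfl; exact (sub_sub_cancel i j).symm

/-- Linearizing the 1st-order backward-difference Burgers discretization (with centered
second-difference diffusion, `ν ≥ 0`) about a constant state `u⁰ = a·𝟙` with `a > 0` yields the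
operator `N^L` with diagonal `a/Δx + 2ν/Δx²`, sub-diagonal `-a/Δx - ν/Δx²` and super-diagonal
`-ν/Δx²` (indices mod `n`); `N^L` is a circulant matrix and all its eigenvalues have
nonnegative real part. -/
theorem stmt_13 {n : ℕ} [NeZero n] (hn : 2 ≤ n) (Δx a ν : ℝ) (hΔx : 0 < Δx) (ha : 0 < a)
    (hν : 0 ≤ ν) (NL : Matrix (Fin n) (Fin n) ℂ)
    (hNL : ∀ i j : Fin n, NL i j =
      if j = i then ((a / Δx + 2 * ν / Δx ^ 2 : ℝ) : ℂ)
      else if j = i - 1 then ((-(a / Δx) - ν / Δx ^ 2 : ℝ) : ℂ)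
      else if j = i + 1 then ((-(ν / Δx ^ 2) : ℝ) : ℂ) else 0) :
    (∃ v : Fin n → ℂ, NL = Matrix.circulant v) ∧
    ∀ μ ∈ spectrum ℂ NL, 0 ≤ μ.re := by
  have hd0 : 0 < a / Δx := by positivity
  have hnu0 : 0 ≤ ν / Δx ^ 2 := by positivity
  have h2d : 2 * ν / Δx ^ 2 = ν / Δx ^ 2 + ν / Δx ^ 2 := by ring
  have h1ne : (1 : Fin n) ≠ 0 := by
    rw [Ne, Fin.one_eq_zero_iff]
    omega
  constructor
  · refine ⟨fun c => if c = 0 then ((a / Δx + 2 * ν / Δx ^ 2 : ℝ) : ℂ)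
      else if c = 1 then ((-(a / Δx) - ν / Δx ^ 2 : ℝ) : ℂ)
      else if c = -1 then ((-(ν / Δx ^ 2) : ℝ) : ℂ) else 0, ?_⟩
    ext i j
    rw [Matrix.circulant_apply, hNL]
    have h0 : (j = i) ↔ (i - j = 0) := by rw [sub_eq_zero, eq_comm]
    have h1 : (j = i - 1) ↔ (i - j = 1) := fin_sub_eq_iff i j 1
    have h2 : (j = i + 1) ↔ (i - j = -1) := by
      rw [show i + 1 = i - (-1) from (sub_neg_eq_add i 1).symm, fin_sub_eq_iff]
    simp only [h0, h1, h2]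
  · intro μ hμ
    have hev : Module.End.HasEigenvalue (Matrix.toLin' NL) μ := by
      rw [Module.End.hasEigenvalue_iff_mem_spectrum]
      have heq : (Matrix.toLinAlgEquiv' NL : (Fin n → ℂ) →ₗ[ℂ] (Fin n → ℂ)) =
          Matrix.toLin' NL := rfl
      rw [← heq, AlgEquiv.spectrum_eq]
      exact hμ
    obtain ⟨k, hk⟩ := eigenvalue_mem_ball hev
    set d : ℝ := a / Δx + 2 * ν / Δx ^ 2 with hdd
    have hkk : NL k k = (d : ℂ) := by rw [hNL]; simp [hdd]
    have hsub : k - 1 ≠ k := by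
      rw [Ne, sub_eq_self]; exact h1ne
    have hsup : k + 1 ≠ k := by
      rw [Ne, add_eq_left]; exact h1ne
    have hsubval : ‖NL k (k - 1)‖ = a / Δx + ν / Δx ^ 2 := by
      rw [hNL]
      rw [if_neg hsub, if_pos rfl, Complex.norm_real, Real.norm_eq_abs, abs_of_nonpos (by linarith)]
      ring
    have hzero : ∀ j, j ≠ k → j ≠ k - 1 → j ≠ k + 1 → ‖NL k j‖ = 0 := by
      intro j hj1 hj2 hj3
      rw [hNL, if_neg hj1, if_neg hj2, if_neg hj3, norm_zero]
    have hradius : (∑ j ∈ Finset.univ.erase k, ‖NL k j‖) ≤ d := by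
      have hsubset : ({k - 1, k + 1} : Finset (Fin n)) ⊆ Finset.univ.erase k := by
        intro j hj
        simp only [Finset.mem_insert, Finset.mem_singleton] at hj
        rcases hj with rfl | rfl
        · exact Finset.mem_erase.mpr ⟨hsub, Finset.mem_univ _⟩
        · exact Finset.mem_erase.mpr ⟨hsup, Finset.mem_univ _⟩
      have hsum : (∑ j ∈ Finset.univ.erase k, ‖NL k j‖)
          = ∑ j ∈ ({k - 1, k + 1} : Finset (Fin n)), ‖NL k j‖ := by
        refine (Finset.sum_subset hsubset ?_).symm
        intro j hj hj'
        simp only [Finset.mem_insert, Finset.mem_singleton, not_or] at hj'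
        exact hzero j (Finset.mem_erase.mp hj).1 hj'.1 hj'.2
      rw [hsum]
      by_cases hc : k - 1 = k + 1
      · rw [hc, Finset.pair_eq_singleton, Finset.sum_singleton]
        -- here NL k (k+1) has the sub-diagonal value since k+1 = k-1
        rw [hNL, if_neg hsup, if_pos hc.symm, Complex.norm_real, Real.norm_eq_abs,
          abs_of_nonpos (by linarith)]
        rw [hdd]; linarith [h2d]
      · rw [Finset.sum_pair hc, hsubval]
        rw [hNL, if_neg hsup, if_neg (fun h => hc h.symm), if_pos rfl,
          Complex.norm_real, Real.norm_eq_abs, abs_of_nonpos (by linarith), hdd]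
        linarith [h2d]
    rw [Metric.mem_closedBall, hkk, dist_eq_norm] at hk
    have hre : d - μ.re ≤ ‖μ - (d : ℂ)‖ := by
      have : |(μ - (d : ℂ)).re| ≤ ‖μ - (d : ℂ)‖ := Complex.abs_re_le_norm _
      have h2 : (μ - (d : ℂ)).re = μ.re - d := by simp
      rw [h2] at this
      calc d - μ.re ≤ |μ.re - d| := by rw [abs_sub_comm]; exact le_abs_self _
        _ ≤ _ := this
    linarith [hk.trans hradius]
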